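/- arXiv:1912.04445 — 5 statements merged into one kernel-verified Lean document; each statement's English description precedes it below -/
import Mathlib

section
/- For all natural numbers n and m, the cylindrical board (7+2n)′×(6+2m) admits a fault-free domino tiling. -/
/-- Adjacency on the cylindrical board `a′ × b` (height `a`, circumference `b`):
cells `(i,j)` and `(i+1,j)` (vertical neighbors) or `(i,j)` and `(i,j+1)` with
addition in `ZMod b` (horizontal neighbors, wrapping around). -/
def cylAdj (a b : ℕ) (c d : Fin a × ZMod b) : Prop :=
  (c.2 = d.2 ∧ ((c.1 : ℕ) + 1 = (d.1 : ℕ) ∨ (d.1 : ℕ) + 1 = (c.1 : ℕ))) ∨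
  (c.1 = d.1 ∧ (d.2 = c.2 + 1 ∨ c.2 = d.2 + 1))

/-- A tiling of the cylindrical board: a set of dominoes (unordered pairs of
adjacent cells) such that every cell belongs to exactly one domino. -/
def cylIsTiling (a b : ℕ) (T : Set (Sym2 (Fin a × ZMod b))) : Prop :=
  (∀ p ∈ T, ∃ c d, cylAdj a b c d ∧ p = s(c, d)) ∧
  (∀ x : Fin a × ZMod b, ∃! p, p ∈ T ∧ x ∈ p)

/-- A tiling of the cylindrical board is fault-free if every horizontal fault-line
(between rows `i` and `i+1`, for `i + 1 < a`) and every vertical fault-line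
(between columns `j` and `j+1`, for `j : ZMod b`) is crossed by some domino. -/
def cylFaultFree (a b : ℕ) (T : Set (Sym2 (Fin a × ZMod b))) : Prop :=
  (∀ i : ℕ, i + 1 < a → ∃ c d : Fin a × ZMod b,
      s(c, d) ∈ T ∧ c.2 = d.2 ∧ (c.1 : ℕ) = i ∧ (d.1 : ℕ) = i + 1) ∧
  (∀ j : ZMod b, ∃ i : Fin a, s((i, j), (i, j + 1)) ∈ T)

/-- The cylindrical board `a′ × b` admits a fault-free domino tiling. -/
def cylFaultFreeTileable (a b : ℕ) : Prop :=
  ∃ T : Set (Sym2 (Fin a × ZMod b)), cylIsTiling a b T ∧ cylFaultFree a b T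

/-!
A tiling is determined by its horizontal dominoes. Let `R j` be the set of rows `i` such that
`(i, j), (i, j + 1)` is a domino. If `R j` and `R (j - 1)` are disjoint and the rows they occupy
cut column `j` into runs of even length, the runs are filled by vertical dominoes, and the
fault-line between rows `i` and `i + 1` is crossed in column `j` exactly when row `i` is free
there and an even number of free cells of column `j` lie in the rows below it.

For odd `a ≥ 7` and even `b ≥ 6` we let every column meet exactly three horizontal dominoes, in
rows of parities even, odd, even. A block of six columns uses enough different row patterns to
cross every horizontal fault-line; the remaining columns repeat a two-column pattern. Every
column starts a horizontal domino, so every vertical fault-line is crossed as well.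
-/

open Finset

/-- `s - #{r ∈ S | r < s}` free rows lie below `s ∈ S`, and `a - #S` in total, so these parity
conditions say that the rows of `S` cut `0, …, a - 1` into runs of even length. -/
def EvenGaps (a : ℕ) (S : Finset ℕ) : Prop :=
  Even (a + #S) ∧ ∀ s ∈ S, s < a ∧ Even (s + #{r ∈ S | r < s})

/-- Pairs the free rows of each run bottom-up: `i` goes up when an even number of free rows lie
below it. -/
def vertPartner (S : Finset ℕ) (i : ℕ) : ℕ :=
  if Even (i + #{r ∈ S | r < i}) then i + 1 else i - 1

lemma card_filter_lt_add_one (S : Finset ℕ) (i : ℕ) :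
    #{r ∈ S | r < i + 1} = #{r ∈ S | r < i} + if i ∈ S then 1 else 0 := by
  rw [filter_congr (q := fun r => r < i ∨ r = i) (fun _ _ => Nat.lt_succ_iff_lt_or_eq), filter_or,
    card_union_of_disjoint (disjoint_filter.2 fun _ _ h => h.ne), filter_eq']
  split_ifs <;> simp

namespace EvenGaps

variable {a : ℕ} {S : Finset ℕ} {i : ℕ}

lemma vertPartner_succ_of_even (h : EvenGaps a S) (hi : i < a) (hiS : i ∉ S)
    (he : Even (i + #{r ∈ S | r < i})) :
    i + 1 < a ∧ i + 1 ∉ S ∧ vertPartner S (i + 1) = i := by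
  have hsucc := card_filter_lt_add_one S i
  rw [if_neg hiS, add_zero] at hsucc
  have hlt : i + 1 < a := by
    by_contra! hia
    have hall : {r ∈ S | r < i} = S :=
      filter_true_of_mem fun s hs => by have := (h.2 s hs).1; grind
    have := h.1
    rw [hall] at he
    simp only [Nat.even_iff] at *
    omega
  refine ⟨hlt, fun hS => ?_, ?_⟩
  · have := (h.2 _ hS).2
    rw [hsucc] at this
    simp only [Nat.even_iff] at *
    omega
  · rw [vertPartner, hsucc, if_neg (by simp only [Nat.even_iff] at *; omega), Nat.add_sub_cancel]

lemma vertPartner_spec (h : EvenGaps a S) (hi : i < a) (hiS : i ∉ S) :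
    vertPartner S i < a ∧ vertPartner S i ∉ S ∧ vertPartner S (vertPartner S i) = i ∧
      (vertPartner S i = i + 1 ∨ vertPartner S i + 1 = i) := by
  by_cases he : Even (i + #{r ∈ S | r < i})
  · obtain ⟨hlt, hS, hback⟩ := h.vertPartner_succ_of_even hi hiS he
    rw [vertPartner, if_pos he]
    exact ⟨hlt, hS, hback, .inl rfl⟩
  · obtain ⟨k, rfl⟩ : ∃ k, i = k + 1 :=
      Nat.exists_eq_succ_of_ne_zero (by rintro rfl; simp at he)
    have hsucc := card_filter_lt_add_one S k
    have hkS : k ∉ S := fun hkS => by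
      have := (h.2 k hkS).2
      rw [if_pos hkS] at hsucc
      rw [hsucc] at he
      simp only [Nat.even_iff] at *
      omega
    rw [if_neg hkS, add_zero] at hsucc
    have hke : Even (k + #{r ∈ S | r < k}) := by
      rw [hsucc] at he; simp only [Nat.even_iff] at *; omega
    obtain ⟨-, -, hback⟩ := h.vertPartner_succ_of_even (by omega) hkS hke
    rw [hback, vertPartner, if_pos hke]
    exact ⟨by omega, hkS, rfl, .inr rfl⟩

end EvenGaps

lemma ZMod.val_sub_one {b : ℕ} [NeZero b] (j : ZMod b) :
    (j - 1).val = if j.val = 0 then b - 1 else j.val - 1 := by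
  split_ifs with h
  · obtain ⟨k, rfl⟩ := Nat.exists_eq_succ_of_ne_zero (NeZero.ne b)
    rw [(ZMod.val_eq_zero j).1 h, zero_sub, ZMod.val_neg_one, Nat.succ_sub_one]
  · have hb : b ≠ 1 := by rintro rfl; exact h (Subsingleton.elim j 0 ▸ ZMod.val_zero)
    rw [ZMod.val_sub (by rw [ZMod.val_one'' hb]; omega), ZMod.val_one'' hb]

def horRows {b : ℕ} (R : ZMod b → Finset ℕ) (j : ZMod b) : Finset ℕ := R j ∪ R (j - 1)

/-- The partner of a cell in the tiling whose horizontal dominoes are `(i, j), (i, j + 1)` for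
`i ∈ R j`. The `% a` only serves to land in `Fin a`; it is the identity under `EvenGaps`. -/
def layoutPartner {a b : ℕ} (R : ZMod b → Finset ℕ) (x : Fin a × ZMod b) : Fin a × ZMod b :=
  if (x.1 : ℕ) ∈ R x.2 then (x.1, x.2 + 1)
  else if (x.1 : ℕ) ∈ R (x.2 - 1) then (x.1, x.2 - 1)
  else (⟨vertPartner (horRows R x.2) x.1 % a, Nat.mod_lt _ x.1.pos⟩, x.2)

section Layout

variable {a b : ℕ} {R : ZMod b → Finset ℕ}

lemma layoutPartner_of_not_mem {i : ℕ} (hi : i < a) {j : ZMod b} (hij : i ∉ horRows R j)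
    (hlt : vertPartner (horRows R j) i < a) :
    layoutPartner R (⟨i, hi⟩, j) = (⟨vertPartner (horRows R j) i, hlt⟩, j) := by
  simp only [horRows, mem_union, not_or] at hij
  simp only [layoutPartner, if_neg hij.1, if_neg hij.2, Nat.mod_eq_of_lt hlt]

lemma layoutPartner_involutive (hdisj : ∀ j, Disjoint (R j) (R (j - 1)))
    (hgaps : ∀ j, EvenGaps a (horRows R j)) : Function.Involutive (layoutPartner (a := a) R) := by
  rintro ⟨⟨i, hi⟩, j⟩
  by_cases hR : i ∈ R j
  · have hR' : i ∉ R (j + 1) := disjoint_right.1 (hdisj (j + 1)) (by simpa using hR)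
    simp [layoutPartner, hR, hR']
  by_cases hL : i ∈ R (j - 1)
  · simp [layoutPartner, hR, hL]
  have hH : i ∉ horRows R j := by simp [horRows, hR, hL]
  obtain ⟨hlt, hH', hback, -⟩ := (hgaps j).vertPartner_spec hi hH
  rw [layoutPartner_of_not_mem hi hH hlt, layoutPartner_of_not_mem hlt hH' (by rwa [hback])]
  simp only [hback]

lemma cylAdj_layoutPartner (hgaps : ∀ j, EvenGaps a (horRows R j)) (x : Fin a × ZMod b) :
    cylAdj a b x (layoutPartner R x) := by
  obtain ⟨⟨i, hi⟩, j⟩ := x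
  by_cases hR : i ∈ R j
  · simp [layoutPartner, hR, cylAdj]
  by_cases hL : i ∈ R (j - 1)
  · simp [layoutPartner, hR, hL, cylAdj]
  have hH : i ∉ horRows R j := by simp [horRows, hR, hL]
  obtain ⟨hlt, -, -, hstep⟩ := (hgaps j).vertPartner_spec hi hH
  rw [layoutPartner_of_not_mem hi hH hlt]
  exact .inl ⟨rfl, hstep.imp_left Eq.symm⟩

end Layout

lemma cylIsTiling_range_of_involutive {a b : ℕ} {f : Fin a × ZMod b → Fin a × ZMod b}
    (hf : Function.Involutive f) (hadj : ∀ x, cylAdj a b x (f x)) :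
    cylIsTiling a b (Set.range fun x => s(x, f x)) := by
  refine ⟨?_, fun x => ⟨s(x, f x), ⟨⟨x, rfl⟩, Sym2.mem_mk_left _ _⟩, ?_⟩⟩
  · rintro _ ⟨x, rfl⟩
    exact ⟨x, f x, hadj x, rfl⟩
  · rintro _ ⟨⟨y, rfl⟩, hxy⟩
    rcases Sym2.mem_iff.1 hxy with rfl | rfl
    · rfl
    · rw [hf y, Sym2.eq_swap]

theorem cylFaultFreeTileable_of_layout {a b : ℕ} (R : ZMod b → Finset ℕ)
    (hdisj : ∀ j, Disjoint (R j) (R (j - 1))) (hgaps : ∀ j, EvenGaps a (horRows R j))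
    (hright : ∀ j, (R j).Nonempty)
    (hvert : ∀ i, i + 1 < a → ∃ j, i ∉ horRows R j ∧ Even (i + #{r ∈ horRows R j | r < i})) :
    cylFaultFreeTileable a b := by
  refine ⟨_, cylIsTiling_range_of_involutive (layoutPartner_involutive hdisj hgaps)
    (cylAdj_layoutPartner hgaps), fun i hi => ?_, fun j => ?_⟩
  · obtain ⟨j, hij, he⟩ := hvert i hi
    have hlt : vertPartner (horRows R j) i < a := by rwa [vertPartner, if_pos he]
    refine ⟨(⟨i, by omega⟩, j), _, ⟨_, rfl⟩, ?_⟩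
    rw [layoutPartner_of_not_mem _ hij hlt]
    exact ⟨rfl, rfl, if_pos he⟩
  · obtain ⟨i, hi⟩ := hright j
    have hia : i < a := ((hgaps j).2 i (mem_union_left _ hi)).1
    exact ⟨⟨i, hia⟩, (⟨i, hia⟩, j), by simp [layoutPartner, hi]⟩

lemma card_filter_lt_triple {r₁ r₂ r₃ : ℕ} (h₁₂ : r₁ < r₂) (h₂₃ : r₂ < r₃) (i : ℕ) :
    #{r ∈ ({r₁, r₂, r₃} : Finset ℕ) | r < i} =
      (if r₁ < i then 1 else 0) + (if r₂ < i then 1 else 0) + (if r₃ < i then 1 else 0) := by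
  rw [filter_insert, filter_insert, filter_singleton]
  split_ifs <;> simp [h₁₂.ne, h₂₃.ne, (h₁₂.trans h₂₃).ne]

lemma evenGaps_triple {a r₁ r₂ r₃ : ℕ} (h₁₂ : r₁ < r₂) (h₂₃ : r₂ < r₃) (h₃a : r₃ < a)
    (h₁ : Even r₁) (h₂ : Odd r₂) (h₃ : Even r₃) (ha : Odd a) :
    EvenGaps a {r₁, r₂, r₃} := by
  refine ⟨?_, fun s hs => ?_⟩
  · rw [card_eq_three.2 ⟨r₁, r₂, r₃, by omega, by omega, by omega, rfl⟩]
    exact ha.add_odd (by decide)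
  · simp only [mem_insert, mem_singleton] at hs
    rw [card_filter_lt_triple h₁₂ h₂₃]
    rcases hs with rfl | rfl | rfl <;> simp only [Nat.even_iff, Nat.odd_iff] at * <;>
      split_ifs <;> omega

/-- `rightRows a v` are the rows of the horizontal dominoes from column `v` to `v + 1`: a block of
six columns, then a two-column pattern; the last column (odd) links row `1` back to column `0`.
`colRows a v` are the rows of all horizontal dominoes meeting column `v`. -/
def rightRows (a : ℕ) : ℕ → Finset ℕ
  | 0 => {0, 4}
  | 1 => {3}
  | 2 => {2, a - 1}
  | 3 => {5}
  | 4 => {0, a - 1}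
  | 5 => {1}
  | v + 6 => if Even v then {0, 2} else {1}

def colRows (a : ℕ) : ℕ → Finset ℕ
  | 0 => {0, 1, 4}
  | 1 => {0, 3, 4}
  | 2 => {2, 3, a - 1}
  | 3 => {2, 5, a - 1}
  | 4 => {0, 5, a - 1}
  | 5 => {0, 1, a - 1}
  | _ + 6 => {0, 1, 2}

lemma rightRows_add_six (a v : ℕ) :
    rightRows a (v + 6) = if Even v then {0, 2} else {1} := rfl

lemma rightRows_nonempty (a v : ℕ) : (rightRows a v).Nonempty := by
  match v with
  | 0 | 1 | 2 | 3 | 4 | 5 => simp [rightRows]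
  | v + 6 => rw [rightRows_add_six]; split_ifs <;> simp

lemma rightRows_of_odd {a v : ℕ} (hv : 5 ≤ v) (hodd : Odd v) : rightRows a v = {1} := by
  obtain rfl | hv := hv.eq_or_lt
  · rfl
  · obtain ⟨w, rfl⟩ := Nat.exists_eq_add_of_le' hv
    rw [rightRows_add_six, if_neg (by simpa [parity_simps] using hodd)]

lemma evenGaps_colRows {a : ℕ} (ha : 7 ≤ a) (hodd : Odd a) (v : ℕ) :
    EvenGaps a (colRows a v) := by
  have : Even (a - 1) := by obtain ⟨k, rfl⟩ := hodd; simp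
  match v with
  | 0 | 1 | _ + 6 =>
    exact evenGaps_triple (by omega) (by omega) (by omega) (by decide) (by decide) (by decide) hodd
  | 2 | 3 | 4 | 5 =>
    exact evenGaps_triple (by omega) (by omega) (by omega) (by decide) (by decide) this hodd

lemma rightRows_disjoint_pred {a v : ℕ} (ha : 7 ≤ a) (hv : 1 ≤ v) :
    Disjoint (rightRows a v) (rightRows a (v - 1)) ∧
      rightRows a v ∪ rightRows a (v - 1) = colRows a v := by
  match v, hv with
  | 1, _ | 2, _ | 3, _ | 4, _ | 5, _ | 6, _ =>
    simp only [rightRows, colRows, disjoint_left, Finset.ext_iff, mem_union, mem_insert,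
      mem_singleton]
    grind
  | w + 7, _ =>
    rw [show w + 7 - 1 = w + 6 from rfl, show w + 7 = (w + 1) + 6 from rfl, rightRows_add_six,
      rightRows_add_six, show colRows a (w + 1 + 6) = {0, 1, 2} from rfl]
    by_cases h : Even w <;> simp only [Nat.even_add_one, h, not_true_eq_false, not_false_eq_true,
      if_true, if_false] <;> decide

lemma horRows_rightRows {a b : ℕ} (ha : 7 ≤ a) (hb : 6 ≤ b) (heven : Even b) (j : ZMod b) :
    Disjoint (rightRows a j.val) (rightRows a (j - 1).val) ∧
      horRows (fun j : ZMod b => rightRows a j.val) j = colRows a j.val := by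
  have : NeZero b := ⟨by omega⟩
  simp only [horRows]
  rw [ZMod.val_sub_one]
  split_ifs with h
  · rw [h, rightRows_of_odd (by omega) (Nat.Even.sub_odd (by omega) heven odd_one)]
    exact (by decide : Disjoint ({0, 4} : Finset ℕ) {1} ∧ ({0, 4} ∪ {1} : Finset ℕ) = {0, 1, 4})
  · exact rightRows_disjoint_pred ha (by omega)

lemma exists_colRows_crossing {a : ℕ} (ha : 7 ≤ a) (i : ℕ) (hi : i + 1 < a) :
    ∃ v < 6, i ∉ colRows a v ∧ Even (i + #{r ∈ colRows a v | r < i}) := by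
  rcases (by omega : i = 1 ∨ i = 3 ∨ (i % 2 = 0 ∧ i ≠ 2) ∨ i = 2 ∨ (5 ≤ i ∧ i % 2 = 1))
    with h | h | h | h <;>
    [refine ⟨1, by norm_num, ?_⟩; refine ⟨3, by norm_num, ?_⟩; refine ⟨2, by norm_num, ?_⟩;
      refine ⟨0, by norm_num, ?_⟩] <;>
  · simp only [colRows]
    rw [card_filter_lt_triple (by omega) (by omega)]
    simp only [mem_insert, mem_singleton, Nat.even_iff]
    split_ifs <;> omega

theorem cylFaultFreeTileable_of_odd_of_even {a b : ℕ} (ha : 7 ≤ a) (hodd : Odd a) (hb : 6 ≤ b)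
    (heven : Even b) : cylFaultFreeTileable a b := by
  have hcol := horRows_rightRows ha hb heven
  have : NeZero b := ⟨by omega⟩
  refine cylFaultFreeTileable_of_layout _ (fun j => (hcol j).1)
    (fun j => (hcol j).2 ▸ evenGaps_colRows ha hodd _) (fun j => rightRows_nonempty _ _)
    fun i hi => ?_
  obtain ⟨v, hv, hcross⟩ := exists_colRows_crossing ha i hi
  refine ⟨v, ?_⟩
  rwa [(hcol v).2, ZMod.val_cast_of_lt (by omega)]

/-- For all natural numbers `n` and `m`, the cylindrical board
`(7 + 2 * n)′ × (6 + 2 * m)` admits a fault-free domino tiling. -/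
theorem cyl_faultFree_7'6 :
    ∀ n m : ℕ, cylFaultFreeTileable (7 + 2 * n) (6 + 2 * m) := fun n m =>
  cylFaultFreeTileable_of_odd_of_even (by omega) ⟨n + 3, by ring⟩ (by omega) ⟨m + 3, by ring⟩
end

section
/- For every natural number n, the cylindrical board (2+n)′×2 does not admit a fault-free domino tiling. -/
/-!
Once the fault-line between rows 0 and 1 is crossed by a vertical domino in one column, the
cell of row 0 in the other column has both its horizontal neighbours (which coincide, the
circumference being 2) already covered, so it is covered by a vertical domino as well. Hence
rows 0 and 1 are tiled by two vertical dominoes. If the height is 2 no horizontal domino is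
left to cross a vertical fault-line; otherwise nothing can cross the line between rows 1 and 2.
-/

theorem cylAdj.symm {a b : ℕ} {c d : Fin a × ZMod b} (h : cylAdj a b c d) : cylAdj a b d c := by
  rcases h with ⟨hcol, hrow⟩ | ⟨hrow, hcol⟩
  · exact Or.inl ⟨hcol.symm, hrow.symm⟩
  · exact Or.inr ⟨hrow.symm, hcol.symm⟩

namespace cylIsTiling

variable {a b : ℕ} {T : Set (Sym2 (Fin a × ZMod b))}

theorem eq_of_mem (hT : cylIsTiling a b T) {x : Fin a × ZMod b} {p q : Sym2 (Fin a × ZMod b)}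
    (hp : p ∈ T) (hq : q ∈ T) (hxp : x ∈ p) (hxq : x ∈ q) : p = q :=
  (hT.2 x).unique ⟨hp, hxp⟩ ⟨hq, hxq⟩

theorem exists_adj_mem (hT : cylIsTiling a b T) (x : Fin a × ZMod b) :
    ∃ y, cylAdj a b x y ∧ s(x, y) ∈ T := by
  obtain ⟨p, ⟨hp, hxp⟩, -⟩ := hT.2 x
  obtain ⟨c, d, hcd, rfl⟩ := hT.1 p hp
  rcases Sym2.mem_iff.1 hxp with rfl | rfl
  · exact ⟨d, hcd, hp⟩
  · exact ⟨c, hcd.symm, Sym2.eq_swap ▸ hp⟩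

end cylIsTiling

theorem ZMod.two_eq_or_eq_add_one (j k : ZMod 2) : k = j ∨ k = j + 1 := by
  revert j k; decide

section Circumference2

variable {m : ℕ} {T : Set (Sym2 (Fin (m + 2) × ZMod 2))}

theorem cylIsTiling.vertical_zero_one_add_one (hT : cylIsTiling (m + 2) 2 T) {j : ZMod 2}
    (hj : s((0, j), (1, j)) ∈ T) : s((0, j + 1), (1, j + 1)) ∈ T := by
  obtain ⟨y, hadj, hy⟩ := hT.exists_adj_mem (0, j + 1)
  rcases hadj with ⟨hcol, hrow⟩ | ⟨hrow, hcol⟩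
  · have hy1 : y = (1, j + 1) := by
      refine Prod.ext (Fin.ext ?_) hcol.symm
      simp only [Fin.val_zero, Fin.val_one] at hrow ⊢
      omega
    rwa [hy1] at hy
  · have hy0 : y = (0, j) := by
      refine Prod.ext hrow.symm ?_
      rcases hcol with h | h
      · rw [h]; exact CharTwo.add_cancel_right j 1
      · exact (add_right_cancel h).symm
    have hsame := hT.eq_of_mem hy hj (hy0 ▸ Sym2.mem_mk_right _ _) (Sym2.mem_mk_left _ _)
    have hmem : ((0 : Fin (m + 2)), j + 1) ∈ s((0, j), (1, j)) := hsame ▸ Sym2.mem_mk_left _ _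
    simp only [Sym2.mem_iff, Prod.mk.injEq] at hmem
    rcases hmem with ⟨-, h⟩ | ⟨h, -⟩
    · exact absurd h (succ_ne_self j)
    · exact absurd (congrArg Fin.val h) (by simp)

theorem cylIsTiling.row_lt_two_and_col_eq (hT : cylIsTiling (m + 2) 2 T)
    (hvert : ∀ k : ZMod 2, s((0, k), (1, k)) ∈ T) {p : Sym2 (Fin (m + 2) × ZMod 2)} (hp : p ∈ T)
    {x y : Fin (m + 2) × ZMod 2} (hx : x ∈ p) (hy : y ∈ p) (hx2 : (x.1 : ℕ) < 2) :
    (y.1 : ℕ) < 2 ∧ y.2 = x.2 := by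
  have hx' : x ∈ s(((0 : Fin (m + 2)), x.2), (1, x.2)) := by
    rw [Sym2.mem_iff]
    rcases (by omega : (x.1 : ℕ) = 0 ∨ (x.1 : ℕ) = 1) with h | h
    · exact Or.inl (Prod.ext (Fin.ext (by simpa using h)) rfl)
    · exact Or.inr (Prod.ext (Fin.ext (by simpa using h)) rfl)
  rw [hT.eq_of_mem hp (hvert x.2) hx hx'] at hy
  rcases Sym2.mem_iff.1 hy with rfl | rfl <;> simp

theorem cylFaultFree.vertical_zero_one (hT : cylIsTiling (m + 2) 2 T)
    (hF : cylFaultFree (m + 2) 2 T) (k : ZMod 2) : s((0, k), (1, k)) ∈ T := by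
  obtain ⟨c, d, hcd, hcol, hc, hd⟩ := hF.1 0 (by omega)
  have hc0 : s((0, c.2), (1, c.2)) ∈ T := by
    convert hcd using 3
    · exact Fin.ext hc.symm
    · exact Fin.ext (by simpa using hd.symm)
  rcases ZMod.two_eq_or_eq_add_one c.2 k with rfl | rfl
  exacts [hc0, hT.vertical_zero_one_add_one hc0]

theorem not_cylFaultFreeTileable_add_two_two (m : ℕ) : ¬ cylFaultFreeTileable (m + 2) 2 := by
  rintro ⟨T, hT, hF⟩
  have hvert := hF.vertical_zero_one hT
  cases m with
  | zero =>
    obtain ⟨i, hi⟩ := hF.2 0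
    have hcol := (hT.row_lt_two_and_col_eq hvert hi (Sym2.mem_mk_left _ _)
      (Sym2.mem_mk_right _ _) i.isLt).2
    exact succ_ne_self 0 hcol
  | succ m =>
    obtain ⟨c, d, hcd, -, hc, hd⟩ := hF.1 1 (by omega)
    have hrow := (hT.row_lt_two_and_col_eq hvert hcd (Sym2.mem_mk_left _ _)
      (Sym2.mem_mk_right _ _) (by omega)).1
    omega

end Circumference2

/-- For every natural number `n`, the cylindrical board `(2 + n)′ × (2)`
does not admit a fault-free domino tiling. -/
theorem cyl_not_faultFree_2n'2 :
    ∀ n : ℕ, ¬ cylFaultFreeTileable (2 + n) (2) := by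
  intro n
  rw [Nat.add_comm]
  exact not_cylFaultFreeTileable_add_two_two n
end

section
/- For every natural number n, the cylindrical board 2′×(2+n) does not admit a fault-free domino tiling. -/
theorem cylIsTiling.eq_of_mem_s7 {a b : ℕ} {T : Set (Sym2 (Fin a × ZMod b))}
    (hT : cylIsTiling a b T) {p q : Sym2 (Fin a × ZMod b)} {x : Fin a × ZMod b}
    (hp : p ∈ T) (hq : q ∈ T) (hxp : x ∈ p) (hxq : x ∈ q) : p = q :=
  (hT.2 x).unique ⟨hp, hxp⟩ ⟨hq, hxq⟩

theorem cyl_horizontal_ne_vertical {a b : ℕ} [NeZero (1 : ZMod b)] (i i₀ i₁ : Fin a)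
    (j : ZMod b) : s((i, j), (i, j + 1)) ≠ s((i₀, j), (i₁, j)) := by
  intro h
  have hmem : (i, j + 1) ∈ s((i₀, j), (i₁, j)) := h ▸ Sym2.mem_mk_right _ _
  have hcol : j + 1 = j := by
    rcases Sym2.mem_iff.mp hmem with h' | h' <;> exact congrArg Prod.snd h'
  exact one_ne_zero (add_eq_left.mp hcol)

theorem cyl_two_vertical_domino_eq {b : ℕ} {c d : Fin 2 × ZMod b} (hcol : c.2 = d.2)
    (hc : (c.1 : ℕ) = 0) (hd : (d.1 : ℕ) = 1) : s(c, d) = s((0, c.2), (1, c.2)) := by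
  obtain ⟨c₁, j⟩ := c
  obtain ⟨d₁, j'⟩ := d
  obtain rfl : j = j' := hcol
  obtain rfl : c₁ = 0 := Fin.ext hc
  obtain rfl : d₁ = 1 := Fin.ext hd
  rfl

/-- For every natural number `n`, the cylindrical board `(2)′ × (2 + n)`
does not admit a fault-free domino tiling. -/
theorem cyl_not_faultFree_2'2n :
    ∀ n : ℕ, ¬ cylFaultFreeTileable (2) (2 + n) := by
  rintro n ⟨T, hT, hHoriz, hVert⟩
  have : Fact (1 < 2 + n) := ⟨by omega⟩
  obtain ⟨c, d, hcdT, hcol, hc, hd⟩ := hHoriz 0 (by norm_num)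
  obtain ⟨i, hiT⟩ := hVert c.2
  rw [cyl_two_vertical_domino_eq hcol hc hd] at hcdT
  have hi : (i, c.2) ∈ s(((0 : Fin 2), c.2), ((1 : Fin 2), c.2)) := by
    fin_cases i <;> simp
  exact cyl_horizontal_ne_vertical i 0 1 c.2
    (hT.eq_of_mem_s7 hiT hcdT (Sym2.mem_mk_left _ _) hi)
end

section
/- For every natural number n, the cylindrical board (4+n)′×4 does not admit a fault-free domino tiling. -/
/-! In every row the cells not covered by vertical dominoes are paired up by horizontal ones, so
the numbers of vertical dominoes crossing the fault-lines just above and just below a row have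
the parity of the circumference `b`. Starting from the empty line above the first row, for even
`b` every horizontal fault-line is crossed by an even, hence at least two, number of dominoes:
there are at least `2 (a - 1)` vertical dominoes, and at least `b` horizontal ones, one per
vertical fault-line. Counting cells gives `2 b + 4 (a - 1) ≤ a b`, which fails for `b = 4`. -/

open Finset

variable {a b : ℕ} {T : Set (Sym2 (Fin a × ZMod b))}

lemma cylAdj_comm {c d : Fin a × ZMod b} : cylAdj a b c d ↔ cylAdj a b d c := by
  unfold cylAdj
  constructor <;> rintro (⟨h1, h2 | h2⟩ | ⟨h1, h2 | h2⟩) <;> simp_all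

lemma cylIsTiling.partner_eq (hT : cylIsTiling a b T) {x y z : Fin a × ZMod b}
    (hy : s(x, y) ∈ T) (hz : s(x, z) ∈ T) : y = z := by
  obtain ⟨p, -, hp⟩ := hT.2 x
  exact Sym2.congr_right.1 <|
    (hp _ ⟨hy, Sym2.mem_mk_left x y⟩).trans (hp _ ⟨hz, Sym2.mem_mk_left x z⟩).symm

lemma cylIsTiling.exists_partner (hT : cylIsTiling a b T) (x : Fin a × ZMod b) :
    ∃ y, cylAdj a b x y ∧ s(x, y) ∈ T := by
  obtain ⟨p, ⟨hp, hx⟩, -⟩ := hT.2 x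
  obtain ⟨c, d, hcd, rfl⟩ := hT.1 p hp
  rcases Sym2.mem_iff.1 hx with rfl | rfl
  · exact ⟨d, hcd, hp⟩
  · exact ⟨c, cylAdj_comm.1 hcd, Sym2.eq_swap ▸ hp⟩

lemma sum_range_add_succ_eq_two_nsmul {M : Type*} [AddCommMonoid M] (f : ℕ → M) {n : ℕ}
    (h0 : f 0 = 0) (hn : f n = 0) :
    ∑ i ∈ range n, (f i + f (i + 1)) = 2 • ∑ i ∈ range n, f i := by
  have hshift : ∑ i ∈ range n, f (i + 1) = ∑ i ∈ range n, f i := by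
    simpa [h0, hn] using (sum_range_succ' f n).symm.trans (sum_range_succ f n)
  rw [sum_add_distrib, hshift, two_nsmul]

section Counting

variable [NeZero b]

open scoped Classical in
/-- Columns `j` of the vertical dominoes `{(k - 1, j), (k, j)}`: they cross the fault-line that
`cylFaultFree` indexes by `k - 1`. The shift makes the crossings above row `i` and below it
`cylVertCols T i` and `cylVertCols T (i + 1)`, even for the first and last rows. -/
noncomputable def cylVertCols (T : Set (Sym2 (Fin a × ZMod b))) (k : ℕ) : Finset (ZMod b) :=
  {j | ∃ c d : Fin a × ZMod b,
    s(c, d) ∈ T ∧ c.2 = j ∧ d.2 = j ∧ (c.1 : ℕ) + 1 = k ∧ (d.1 : ℕ) = k}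

open scoped Classical in
noncomputable def cylHorzCols (T : Set (Sym2 (Fin a × ZMod b))) (i : Fin a) : Finset (ZMod b) :=
  {j | s((i, j), (i, j + 1)) ∈ T}

lemma cylVertCols_zero : cylVertCols T 0 = ∅ := by
  simp [cylVertCols]

lemma cylVertCols_of_le {k : ℕ} (hk : a ≤ k) : cylVertCols T k = ∅ := by
  simp only [cylVertCols, filter_eq_empty_iff, mem_univ, true_implies, not_exists, not_and]
  intro j c d _ _ _ _ hd
  omega

lemma mem_cylVertCols_iff_above {i : Fin a} {j : ZMod b} :
    j ∈ cylVertCols T i ↔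
      ∃ y : Fin a × ZMod b, (y.1 : ℕ) + 1 = i ∧ y.2 = j ∧ s((i, j), y) ∈ T := by
  simp only [cylVertCols, mem_filter, mem_univ, true_and]
  constructor
  · rintro ⟨c, d, hcd, hc, hd, hci, hdi⟩
    obtain rfl : d = (i, j) := Prod.ext (Fin.ext hdi) hd
    exact ⟨c, hci, hc, Sym2.eq_swap ▸ hcd⟩
  · rintro ⟨y, hyi, hy, hyT⟩
    exact ⟨y, (i, j), Sym2.eq_swap ▸ hyT, hy, rfl, hyi, rfl⟩

lemma mem_cylVertCols_iff_below {i : Fin a} {j : ZMod b} :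
    j ∈ cylVertCols T (i + 1) ↔
      ∃ y : Fin a × ZMod b, (y.1 : ℕ) = i + 1 ∧ y.2 = j ∧ s((i, j), y) ∈ T := by
  simp only [cylVertCols, mem_filter, mem_univ, true_and]
  constructor
  · rintro ⟨c, d, hcd, hc, hd, hci, hdi⟩
    obtain rfl : c = (i, j) := Prod.ext (Fin.ext (by simpa using hci)) hc
    exact ⟨d, hdi, hd, hcd⟩
  · rintro ⟨y, hyi, hy, hyT⟩
    exact ⟨(i, j), y, hyT, rfl, hy, rfl, hyi⟩

lemma mem_cylHorzCols_iff {i : Fin a} {j : ZMod b} :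
    j ∈ cylHorzCols T i ↔ s((i, j), (i, j + 1)) ∈ T := by
  simp [cylHorzCols]

lemma mem_map_cylHorzCols_iff {i : Fin a} {j : ZMod b} :
    j ∈ (cylHorzCols T i).map (Equiv.addRight 1).toEmbedding ↔ s((i, j), (i, j - 1)) ∈ T := by
  rw [mem_map_equiv, mem_cylHorzCols_iff, Sym2.eq_swap]
  simp [sub_eq_add_neg]

lemma exists_partner_of_mem_cylVertCols_union {i : Fin a} {j : ZMod b}
    (h : j ∈ cylVertCols T i ∪ cylVertCols T (i + 1)) :
    ∃ y : Fin a × ZMod b, y.1 ≠ i ∧ s((i, j), y) ∈ T := by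
  rcases mem_union.1 h with h | h
  · obtain ⟨y, hyi, -, hy⟩ := mem_cylVertCols_iff_above.1 h
    exact ⟨y, fun hy' => by simp [hy'] at hyi, hy⟩
  · obtain ⟨y, hyi, -, hy⟩ := mem_cylVertCols_iff_below.1 h
    exact ⟨y, fun hy' => by simp [hy'] at hyi, hy⟩

/-- The four sets sort the cells of row `i` by the position of their partner: above, below,
right, left. -/
lemma mem_row_union_of_adj {i : Fin a} {j : ZMod b} {y : Fin a × ZMod b}
    (hadj : cylAdj a b (i, j) y) (hy : s((i, j), y) ∈ T) :
    j ∈ cylVertCols T i ∪ cylVertCols T (i + 1) ∪ cylHorzCols T i ∪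
      (cylHorzCols T i).map (Equiv.addRight 1).toEmbedding := by
  simp only [mem_union, mem_cylVertCols_iff_above, mem_cylVertCols_iff_below,
    mem_cylHorzCols_iff, mem_map_cylHorzCols_iff]
  obtain ⟨yi, yj⟩ := y
  rcases hadj with ⟨rfl, hyi | hyi⟩ | ⟨rfl, rfl | hj⟩
  · exact Or.inl (Or.inl (Or.inr ⟨_, hyi.symm, rfl, hy⟩))
  · exact Or.inl (Or.inl (Or.inl ⟨_, hyi, rfl, hy⟩))
  · exact Or.inl (Or.inr hy)
  · obtain rfl : yj = j - 1 := eq_sub_of_add_eq hj.symm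
    exact Or.inr hy

lemma cylIsTiling.card_row (hT : cylIsTiling a b T) (h2 : (2 : ZMod b) ≠ 0) (i : Fin a) :
    #(cylVertCols T i) + #(cylVertCols T (i + 1)) + 2 * #(cylHorzCols T i) = b := by
  set A := cylVertCols T i
  set B := cylVertCols T (i + 1)
  set C := cylHorzCols T i
  set D := C.map (Equiv.addRight 1).toEmbedding
  have hcover : A ∪ B ∪ C ∪ D = univ := eq_univ_of_forall fun j =>
    let ⟨_, hadj, hy⟩ := hT.exists_partner (i, j)
    mem_row_union_of_adj hadj hy
  have hAB : Disjoint A B := disjoint_left.2 fun j hA hB => by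
    obtain ⟨y, hyi, -, hy⟩ := mem_cylVertCols_iff_above.1 hA
    obtain ⟨z, hzi, -, hz⟩ := mem_cylVertCols_iff_below.1 hB
    obtain rfl := hT.partner_eq hy hz
    omega
  have hABC : Disjoint (A ∪ B) C := disjoint_left.2 fun j hAorB hC => by
    obtain ⟨y, hyi, hy⟩ := exists_partner_of_mem_cylVertCols_union hAorB
    exact hyi (hT.partner_eq (mem_cylHorzCols_iff.1 hC) hy ▸ rfl)
  have hABCD : Disjoint (A ∪ B ∪ C) D := disjoint_left.2 fun j hABorC hD => by
    have hD : ∀ {z}, s((i, j), z) ∈ T → (i, j - 1) = z :=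
      hT.partner_eq (mem_map_cylHorzCols_iff.1 hD)
    rcases mem_union.1 hABorC with hAorB | hC
    · obtain ⟨y, hyi, hy⟩ := exists_partner_of_mem_cylVertCols_union hAorB
      exact hyi (hD hy ▸ rfl)
    · have hj : j - 1 = j + 1 := congrArg Prod.snd (hD (mem_cylHorzCols_iff.1 hC))
      exact h2 (by linear_combination -hj)
  calc #A + #B + 2 * #C = #(A ∪ B ∪ C ∪ D) := by
        rw [card_union_of_disjoint hABCD, card_union_of_disjoint hABC,
          card_union_of_disjoint hAB, card_map]
        ring
    _ = b := by rw [hcover, card_univ, ZMod.card]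

lemma cylIsTiling.even_card_cylVertCols (hT : cylIsTiling a b T) (h2 : (2 : ZMod b) ≠ 0)
    (hb : Even b) : ∀ k, Even #(cylVertCols T k)
  | 0 => by simp [cylVertCols_zero]
  | k + 1 => by
    rcases lt_or_ge k a with hk | hk
    · have hrow := hT.card_row h2 ⟨k, hk⟩
      have ih := hT.even_card_cylVertCols h2 hb k
      rw [← hrow] at hb
      simpa [Nat.even_add, ih] using hb
    · simp [cylVertCols_of_le (by omega : a ≤ k + 1)]

lemma cylFaultFree.two_le_card_cylVertCols (hF : cylFaultFree a b T) (hT : cylIsTiling a b T)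
    (h2 : (2 : ZMod b) ≠ 0) (hb : Even b) {k : ℕ} (hk0 : 0 < k) (hka : k < a) :
    2 ≤ #(cylVertCols T k) := by
  obtain ⟨c, d, hcd, hcol, hc, hd⟩ := hF.1 (k - 1) (by omega)
  have hne : #(cylVertCols T k) ≠ 0 := card_ne_zero_of_mem (a := c.2) <| by
    simp only [cylVertCols, mem_filter, mem_univ, true_and]
    exact ⟨c, d, hcd, rfl, hcol.symm, by omega, by omega⟩
  obtain ⟨m, hm⟩ := hT.even_card_cylVertCols h2 hb k
  omega

/-- Twice the number of dominoes is the number of cells. -/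
lemma cylIsTiling.two_mul_sum_card_add_two_mul_sum_card (hT : cylIsTiling a b T)
    (h2 : (2 : ZMod b) ≠ 0) :
    2 * ∑ k ∈ range a, #(cylVertCols T k) + 2 * ∑ i, #(cylHorzCols T i) = a * b := by
  have hvert : ∑ i : Fin a, (#(cylVertCols T i) + #(cylVertCols T (i + 1))) =
      2 * ∑ k ∈ range a, #(cylVertCols T k) := by
    rw [Fin.sum_univ_eq_sum_range (fun k => #(cylVertCols T k) + #(cylVertCols T (k + 1))),
      sum_range_add_succ_eq_two_nsmul _ (by simp [cylVertCols_zero])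
        (by simp [cylVertCols_of_le le_rfl]), smul_eq_mul]
  rw [← hvert, mul_sum, ← sum_add_distrib]
  simp [hT.card_row h2]

lemma cylFaultFree.two_mul_le_sum_card_cylVertCols (hF : cylFaultFree a b T)
    (hT : cylIsTiling a b T) (h2 : (2 : ZMod b) ≠ 0) (hb : Even b) :
    2 * (a - 1) ≤ ∑ k ∈ range a, #(cylVertCols T k) :=
  calc 2 * (a - 1) = #(Ioo 0 a) • 2 := by simp [mul_comm]
    _ ≤ ∑ k ∈ Ioo 0 a, #(cylVertCols T k) := card_nsmul_le_sum _ _ _ fun k hk =>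
        hF.two_le_card_cylVertCols hT h2 hb (mem_Ioo.1 hk).1 (mem_Ioo.1 hk).2
    _ ≤ ∑ k ∈ range a, #(cylVertCols T k) :=
        sum_le_sum_of_subset fun k hk => mem_range.2 (mem_Ioo.1 hk).2

lemma cylFaultFree.le_sum_card_cylHorzCols (hF : cylFaultFree a b T) :
    b ≤ ∑ i, #(cylHorzCols T i) :=
  calc b = #(univ : Finset (ZMod b)) := by rw [card_univ, ZMod.card]
    _ ≤ #(univ.biUnion (cylHorzCols T)) := card_le_card fun j _ => by
        obtain ⟨i, hi⟩ := hF.2 j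
        exact mem_biUnion.2 ⟨i, mem_univ i, mem_cylHorzCols_iff.2 hi⟩
    _ ≤ ∑ i, #(cylHorzCols T i) := card_biUnion_le

theorem cylFaultFreeTileable.two_mul_add_four_mul_le (hb : Even b) (h2 : (2 : ZMod b) ≠ 0)
    (h : cylFaultFreeTileable a b) : 2 * b + 4 * (a - 1) ≤ a * b := by
  obtain ⟨T, hT, hF⟩ := h
  have hcells := hT.two_mul_sum_card_add_two_mul_sum_card h2
  have hvert := hF.two_mul_le_sum_card_cylVertCols hT h2 hb
  have hhorz := hF.le_sum_card_cylHorzCols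
  omega

end Counting

/-- For every natural number `n`, the cylindrical board `(4 + n)′ × (4)`
does not admit a fault-free domino tiling. -/
theorem cyl_not_faultFree_4n'4 :
    ∀ n : ℕ, ¬ cylFaultFreeTileable (4 + n) (4) := by
  intro n h
  have := h.two_mul_add_four_mul_le (by decide) (by decide)
  omega
end

section
/- For all natural numbers n and m, each of the torus boards (8+2n)′×(7+2m)′, (9+2n)′×(6+2m)′, and (10+2n)′×(5+2m)′ admits a fault-free domino tiling. -/
/-!
Fault-free tilings of the torus survive the insertion of two rows (and, by transposition, of two
columns) as soon as there are at least three rows. Insert two new rows between rows `0` and `1`: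
every vertical domino across the old line `0|1` is stretched into two vertical dominoes, and in
every other column the two new cells form a vertical domino. The old fault-lines stay crossed. The
line between the two new rows is crossed in a column where the old line `1|2` was crossed, since
no domino crosses `0|1` there; the two lines next to it are crossed where `0|1` was. Hence the
three families follow from explicit fault-free tilings of `8′×7′`, `9′×6′` and `10′×5′`.
-/

/-- Adjacency on the torus board `a′ × b′`: cells `(i,j)` and `(i+1,j)` with
addition in `ZMod a` (vertical neighbors, wrapping around) or `(i,j)` and
`(i,j+1)` with addition in `ZMod b` (horizontal neighbors, wrapping around). -/
def torAdj (a b : ℕ) (c d : ZMod a × ZMod b) : Prop :=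
  (c.2 = d.2 ∧ (d.1 = c.1 + 1 ∨ c.1 = d.1 + 1)) ∨
  (c.1 = d.1 ∧ (d.2 = c.2 + 1 ∨ c.2 = d.2 + 1))

/-- A tiling of the torus board: a set of dominoes (unordered pairs of adjacent
cells) such that every cell belongs to exactly one domino. -/
def torIsTiling (a b : ℕ) (T : Set (Sym2 (ZMod a × ZMod b))) : Prop :=
  (∀ p ∈ T, ∃ c d, torAdj a b c d ∧ p = s(c, d)) ∧
  (∀ x : ZMod a × ZMod b, ∃! p, p ∈ T ∧ x ∈ p)

/-- A tiling of the torus board is fault-free if every horizontal fault-line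
(between rows `i` and `i+1`, for `i : ZMod a`) and every vertical fault-line
(between columns `j` and `j+1`, for `j : ZMod b`) is crossed by some domino. -/
def torFaultFree (a b : ℕ) (T : Set (Sym2 (ZMod a × ZMod b))) : Prop :=
  (∀ i : ZMod a, ∃ j : ZMod b, s((i, j), (i + 1, j)) ∈ T) ∧
  (∀ j : ZMod b, ∃ i : ZMod a, s((i, j), (i, j + 1)) ∈ T)

/-- The torus board `a′ × b′` admits a fault-free domino tiling. -/
def torFaultFreeTileable (a b : ℕ) : Prop :=
  ∃ T : Set (Sym2 (ZMod a × ZMod b)), torIsTiling a b T ∧ torFaultFree a b T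

theorem ZMod.natCast_ne_natCast_of_lt {n k l : ℕ} (hk : k < n) (hl : l < n) (h : k ≠ l) :
    (k : ZMod n) ≠ l := fun e => h <| by
  simpa [ZMod.val_natCast_of_lt hk, ZMod.val_natCast_of_lt hl] using congrArg ZMod.val e

theorem torAdj_of_eq_add_one {a b : ℕ} {i i' : ZMod a} (h : i' = i + 1) (j : ZMod b) :
    torAdj a b (i, j) (i', j) :=
  .inl ⟨rfl, .inl h⟩

theorem torAdj_of_add_one_eq {a b : ℕ} {i i' : ZMod a} (h : i = i' + 1) (j : ZMod b) :
    torAdj a b (i, j) (i', j) :=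
  .inl ⟨rfl, .inr h⟩

theorem torAdj_swap {a b : ℕ} {x y : ZMod a × ZMod b} (h : torAdj a b x y) :
    torAdj b a x.swap y.swap := by
  unfold torAdj at *
  tauto

/-- A tiling is recorded as the involution sending each cell to the other cell of its domino. -/
structure IsFaultFreeMatching (a b : ℕ) (f : ZMod a × ZMod b → ZMod a × ZMod b) : Prop where
  involutive : Function.Involutive f
  adj : ∀ x, torAdj a b x (f x)
  crosses_row : ∀ i : ZMod a, ∃ j, f (i, j) = (i + 1, j)
  crosses_col : ∀ j : ZMod b, ∃ i, f (i, j) = (i, j + 1)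

namespace IsFaultFreeMatching

variable {a b : ℕ} {f : ZMod a × ZMod b → ZMod a × ZMod b}

theorem transpose (hf : IsFaultFreeMatching a b f) :
    IsFaultFreeMatching b a (Prod.swap ∘ f ∘ Prod.swap) where
  involutive x := by simp [hf.involutive _]
  adj x := torAdj_swap (hf.adj x.swap)
  crosses_row i := let ⟨j, hj⟩ := hf.crosses_col i; ⟨j, by simp [hj]⟩
  crosses_col j := let ⟨i, hi⟩ := hf.crosses_row j; ⟨i, by simp [hi]⟩

theorem faultFreeTileable (hf : IsFaultFreeMatching a b f) : torFaultFreeTileable a b := by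
  refine ⟨Set.range fun x => s(x, f x),
    ⟨?_, fun x => ⟨s(x, f x), ⟨⟨x, rfl⟩, by simp⟩, ?_⟩⟩, ?_, ?_⟩
  · rintro _ ⟨x, rfl⟩
    exact ⟨x, f x, hf.adj x, rfl⟩
  · rintro _ ⟨⟨y, rfl⟩, hx⟩
    rcases Sym2.mem_iff.mp hx with rfl | rfl
    · rfl
    · rw [hf.involutive y, Sym2.eq_swap]
  · intro i
    obtain ⟨j, hj⟩ := hf.crosses_row i
    exact ⟨j, (i, j), by simp only [hj]⟩
  · intro j
    obtain ⟨i, hi⟩ := hf.crosses_col j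
    exact ⟨i, (i, j), by simp only [hi]⟩

end IsFaultFreeMatching

section RowInsertion

variable {a : ℕ}

/-- Row `r ≠ 0` of `a′ × b′` becomes row `r + 2` of `(a+2)′ × b′`, and row `0` stays; rows `1, 2`
are the inserted ones. On other rows `dropRow` inverts it (the truncated subtraction sends `0` to
`0`). -/
def liftRow (r : ZMod a) : ZMod (a + 2) :=
  if r = 0 then 0 else ((r.val + 2 : ℕ) : ZMod (a + 2))

def dropRow (i : ZMod (a + 2)) : ZMod a :=
  ((i.val - 2 : ℕ) : ZMod a)

theorem liftRow_zero : liftRow (0 : ZMod a) = 0 := if_pos rfl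

variable [NeZero a]

theorem val_liftRow (r : ZMod a) : (liftRow r).val = if r = 0 then 0 else r.val + 2 := by
  unfold liftRow
  split_ifs
  · exact ZMod.val_zero
  · exact ZMod.val_cast_of_lt (by have := ZMod.val_lt r; omega)

theorem dropRow_liftRow (r : ZMod a) : dropRow (liftRow r) = r := by
  rw [dropRow, val_liftRow]
  split_ifs with h
  · simp [h]
  · simp

theorem liftRow_eq_zero_iff {r : ZMod a} : liftRow r = 0 ↔ r = 0 := by
  rw [← ZMod.val_eq_zero, val_liftRow]
  split_ifs <;> simpa

theorem val_liftRow_eq_zero_or_three_le (r : ZMod a) :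
    (liftRow r).val = 0 ∨ 3 ≤ (liftRow r).val := by
  rw [val_liftRow]
  split_ifs with h
  · exact .inl rfl
  · have := (ZMod.val_ne_zero r).mpr h
    omega

theorem liftRow_ne_one (r : ZMod a) : liftRow r ≠ 1 := fun h => by
  have := val_liftRow_eq_zero_or_three_le r
  rw [h, ZMod.val_one'' (by omega)] at this
  omega

theorem liftRow_ne_two (r : ZMod a) : liftRow r ≠ 2 := fun h => by
  have := val_liftRow_eq_zero_or_three_le r
  rw [h, ZMod.val_ofNat_of_lt (by simp [NeZero.pos a])] at this
  omega

theorem liftRow_dropRow {i : ZMod (a + 2)} (h1 : i ≠ 1) (h2 : i ≠ 2) :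
    liftRow (dropRow i) = i := by
  have hlt := ZMod.val_lt i
  have := NeZero.pos a
  have hv1 : i.val ≠ 1 := fun h => h1 (ZMod.val_injective _ (by
    rw [h, ZMod.val_one'' (by omega)]))
  have hv2 : i.val ≠ 2 := fun h => h2 (ZMod.val_injective _ (by
    rw [h, ZMod.val_ofNat_of_lt (by simp [NeZero.pos a])]))
  have hd : (dropRow i).val = i.val - 2 := ZMod.val_cast_of_lt (by omega)
  apply ZMod.val_injective
  simp only [val_liftRow, ← ZMod.val_eq_zero, hd]
  split_ifs <;> omega

theorem eq_one_or_eq_two_or_exists_liftRow (i : ZMod (a + 2)) :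
    i = 1 ∨ i = 2 ∨ ∃ r : ZMod a, liftRow r = i := by
  by_cases h1 : i = 1
  · exact .inl h1
  by_cases h2 : i = 2
  · exact .inr (.inl h2)
  exact .inr (.inr ⟨_, liftRow_dropRow h1 h2⟩)

theorem liftRow_one (ha : 2 ≤ a) : liftRow (1 : ZMod a) = 3 := by
  apply ZMod.val_injective
  have h1 : (1 : ZMod a).val = 1 := ZMod.val_one'' (by omega)
  have h3 : (3 : ZMod (a + 2)).val = 3 := ZMod.val_ofNat_of_lt (by simp; omega)
  rw [val_liftRow, if_neg ((ZMod.val_ne_zero _).mp (by omega)), h1, h3]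

theorem liftRow_eq_three_iff (ha : 2 ≤ a) {r : ZMod a} : liftRow r = 3 ↔ r = 1 := by
  rw [← liftRow_one ha]
  exact ⟨fun h => by simpa [dropRow_liftRow] using congrArg dropRow h, fun h => h ▸ rfl⟩

theorem liftRow_add_one {r : ZMod a} (hr : r ≠ 0) : liftRow (r + 1) = liftRow r + 1 := by
  have hr' : r.val ≠ 0 := (ZMod.val_ne_zero r).mpr hr
  have hlt := ZMod.val_lt r
  rcases (show r.val + 1 < a ∨ r.val + 1 = a by omega) with h | h
  · have hv : (r + 1).val = r.val + 1 := by
      rw [ZMod.val_add_of_lt] <;> rw [ZMod.val_one'' (by omega)]; omega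
    rw [liftRow, liftRow, if_neg hr, if_neg ((ZMod.val_ne_zero _).mp (by omega)), hv]
    push_cast; ring
  · have h0 : r + 1 = 0 := by
      rw [← ZMod.natCast_zmod_val r, ← Nat.cast_add_one, h, ZMod.natCast_self]
    rw [h0, liftRow_zero, liftRow, if_neg hr, ← Nat.cast_add_one,
      show r.val + 2 + 1 = a + 2 by omega, ZMod.natCast_self]

end RowInsertion

section InsertRows

variable {a b : ℕ}

def liftCell (x : ZMod a × ZMod b) : ZMod (a + 2) × ZMod b := (liftRow x.1, x.2)

def CrossesRowZero (f : ZMod a × ZMod b → ZMod a × ZMod b) (x : ZMod a × ZMod b) : Prop :=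
  f (0, x.2) = (1, x.2) ∧ (x.1 = 0 ∨ x.1 = 1)

def insertRows (f : ZMod a × ZMod b → ZMod a × ZMod b) (x : ZMod (a + 2) × ZMod b) :
    ZMod (a + 2) × ZMod b :=
  if x.1 = 1 then (if f (0, x.2) = (1, x.2) then (0, x.2) else (2, x.2))
  else if x.1 = 2 then (if f (0, x.2) = (1, x.2) then (3, x.2) else (1, x.2))
  else if f (0, x.2) = (1, x.2) ∧ x.1 = 0 then (1, x.2)
  else if f (0, x.2) = (1, x.2) ∧ x.1 = 3 then (2, x.2)
  else liftCell (f (dropRow x.1, x.2))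

variable {f : ZMod a × ZMod b → ZMod a × ZMod b}

theorem insertRows_one (j : ZMod b) :
    insertRows f (1, j) = if f (0, j) = (1, j) then (0, j) else (2, j) := if_pos rfl

theorem insertRows_two (ha : 1 ≤ a) (j : ZMod b) :
    insertRows f (2, j) = if f (0, j) = (1, j) then (3, j) else (1, j) := by
  have h21 : (2 : ZMod (a + 2)) ≠ 1 := by
    exact_mod_cast ZMod.natCast_ne_natCast_of_lt (n := a + 2) (k := 2) (l := 1)
      (by omega) (by omega) (by omega)
  simp [insertRows, h21]

theorem insertRows_zero_of_crosses (ha : 1 ≤ a) {j : ZMod b} (h : f (0, j) = (1, j)) :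
    insertRows f (0, j) = (1, j) := by
  have h01 : (0 : ZMod (a + 2)) ≠ 1 := by
    exact_mod_cast ZMod.natCast_ne_natCast_of_lt (n := a + 2) (k := 0) (l := 1)
      (by omega) (by omega) (by omega)
  have h02 : (0 : ZMod (a + 2)) ≠ 2 := by
    exact_mod_cast ZMod.natCast_ne_natCast_of_lt (n := a + 2) (k := 0) (l := 2)
      (by omega) (by omega) (by omega)
  simp [insertRows, h01, h02, h]

theorem insertRows_three_of_crosses (ha : 2 ≤ a) {j : ZMod b} (h : f (0, j) = (1, j)) :
    insertRows f (3, j) = (2, j) := by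
  have h30 : (3 : ZMod (a + 2)) ≠ 0 := by
    exact_mod_cast ZMod.natCast_ne_natCast_of_lt (n := a + 2) (k := 3) (l := 0)
      (by omega) (by omega) (by omega)
  have h31 : (3 : ZMod (a + 2)) ≠ 1 := by
    exact_mod_cast ZMod.natCast_ne_natCast_of_lt (n := a + 2) (k := 3) (l := 1)
      (by omega) (by omega) (by omega)
  have h32 : (3 : ZMod (a + 2)) ≠ 2 := by
    exact_mod_cast ZMod.natCast_ne_natCast_of_lt (n := a + 2) (k := 3) (l := 2)
      (by omega) (by omega) (by omega)
  simp [insertRows, h30, h31, h32, h]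

theorem insertRows_liftCell (ha : 2 ≤ a) {x : ZMod a × ZMod b} (hx : ¬CrossesRowZero f x) :
    insertRows f (liftCell x) = liftCell (f x) := by
  have : NeZero a := ⟨by omega⟩
  simp only [insertRows, liftCell, liftRow_ne_one, liftRow_ne_two, liftRow_eq_zero_iff,
    liftRow_eq_three_iff ha, dropRow_liftRow, if_false]
  unfold CrossesRowZero at hx
  rw [if_neg (by tauto), if_neg (by tauto)]

theorem CrossesRowZero.apply (hf : Function.Involutive f) {x : ZMod a × ZMod b}
    (hx : CrossesRowZero f x) : CrossesRowZero f (f x) := by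
  obtain ⟨i, j⟩ := x
  obtain ⟨hc, rfl | rfl⟩ := hx
  · rw [hc]
    exact ⟨hc, .inr rfl⟩
  · rw [← hf.eq_iff.mp hc]
    exact ⟨hc, .inl rfl⟩

theorem crossesRowZero_apply_iff (hf : Function.Involutive f) {x : ZMod a × ZMod b} :
    CrossesRowZero f (f x) ↔ CrossesRowZero f x :=
  ⟨fun h => hf x ▸ h.apply hf, fun h => h.apply hf⟩

theorem torAdj_liftCell_apply [NeZero a] (hf : IsFaultFreeMatching a b f) {x : ZMod a × ZMod b}
    (hx : ¬CrossesRowZero f x) : torAdj (a + 2) b (liftCell x) (liftCell (f x)) := by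
  obtain ⟨i, j⟩ := x
  rcases hf.adj (i, j) with ⟨hcol, hv | hv⟩ | ⟨hrow, hh⟩
  · dsimp only at hcol hv
    have hi : i ≠ 0 := by
      rintro rfl
      exact hx ⟨Prod.ext (by rw [hv, zero_add]) hcol.symm, .inl rfl⟩
    refine .inl ⟨hcol, .inl ?_⟩
    change liftRow (f (i, j)).1 = liftRow i + 1
    rw [hv, liftRow_add_one hi]
  · dsimp only at hcol hv
    have hi : (f (i, j)).1 ≠ 0 := by
      intro h0
      have hfx : f (i, j) = (0, j) := Prod.ext h0 hcol.symm
      rw [h0, zero_add] at hv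
      subst hv
      exact hx ⟨by rw [← hfx, hf.involutive], .inr rfl⟩
    refine .inl ⟨hcol, .inr ?_⟩
    change liftRow i = liftRow (f (i, j)).1 + 1
    rw [← liftRow_add_one hi, ← hv]
  · exact .inr ⟨congrArg liftRow hrow, hh⟩

namespace IsFaultFreeMatching

theorem insertRows_involutive (hf : IsFaultFreeMatching a b f) (ha : 2 ≤ a) :
    Function.Involutive (insertRows f) := by
  have : NeZero a := ⟨by omega⟩
  rintro ⟨i, j⟩
  rcases eq_one_or_eq_two_or_exists_liftRow i with rfl | rfl | ⟨r, rfl⟩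
  · rw [insertRows_one]
    split_ifs with hc
    · exact insertRows_zero_of_crosses (by omega) hc
    · rw [insertRows_two (by omega), if_neg hc]
  · rw [insertRows_two (by omega)]
    split_ifs with hc
    · rw [insertRows_three_of_crosses ha hc]
    · rw [insertRows_one, if_neg hc]
  · by_cases hx : CrossesRowZero f (r, j)
    · obtain ⟨hc, rfl | rfl⟩ := hx
      · rw [liftRow_zero, insertRows_zero_of_crosses (by omega) hc, insertRows_one, if_pos hc]
      · rw [liftRow_one ha, insertRows_three_of_crosses ha hc, insertRows_two (by omega),
          if_pos hc]
    · have hfx := (crossesRowZero_apply_iff hf.involutive).not.mpr hx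
      change insertRows f (insertRows f (liftCell (r, j))) = liftCell (r, j)
      rw [insertRows_liftCell ha hx, insertRows_liftCell ha hfx, hf.involutive]

theorem torAdj_insertRows (hf : IsFaultFreeMatching a b f) (ha : 2 ≤ a)
    (x : ZMod (a + 2) × ZMod b) :
    torAdj (a + 2) b x (insertRows f x) := by
  have : NeZero a := ⟨by omega⟩
  obtain ⟨i, j⟩ := x
  rcases eq_one_or_eq_two_or_exists_liftRow i with rfl | rfl | ⟨r, rfl⟩
  · rw [insertRows_one]
    split_ifs
    · exact torAdj_of_add_one_eq (zero_add 1).symm j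
    · exact torAdj_of_eq_add_one one_add_one_eq_two.symm j
  · rw [insertRows_two (by omega)]
    split_ifs
    · exact torAdj_of_eq_add_one two_add_one_eq_three.symm j
    · exact torAdj_of_add_one_eq one_add_one_eq_two.symm j
  · by_cases hx : CrossesRowZero f (r, j)
    · obtain ⟨hc, rfl | rfl⟩ := hx
      · rw [liftRow_zero, insertRows_zero_of_crosses (by omega) hc]
        exact torAdj_of_eq_add_one (zero_add 1).symm j
      · rw [liftRow_one ha, insertRows_three_of_crosses ha hc]
        exact torAdj_of_add_one_eq two_add_one_eq_three.symm j
    · change torAdj _ _ (liftCell (r, j)) (insertRows f (liftCell (r, j)))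
      rw [insertRows_liftCell ha hx]
      exact torAdj_liftCell_apply hf hx

theorem insertRows_crosses_row (hf : IsFaultFreeMatching a b f) (ha : 3 ≤ a)
    (i : ZMod (a + 2)) :
    ∃ j, insertRows f (i, j) = (i + 1, j) := by
  have : NeZero a := ⟨by omega⟩
  have h20 : (2 : ZMod a) ≠ 0 := by
    exact_mod_cast ZMod.natCast_ne_natCast_of_lt (n := a) (k := 2) (l := 0)
      (by omega) (by omega) (by omega)
  have not_crosses_zero (j : ZMod b) (hj : f (1, j) = (1 + 1, j)) : f (0, j) ≠ (1, j) := by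
    intro hc
    have := congrArg Prod.fst ((hf.involutive.eq_iff.mp hc).trans hj)
    exact h20 (by simpa [one_add_one_eq_two] using this.symm)
  obtain ⟨j₀, hj₀⟩ := hf.crosses_row 0
  rw [zero_add] at hj₀
  rcases eq_one_or_eq_two_or_exists_liftRow i with rfl | rfl | ⟨r, rfl⟩
  · obtain ⟨j, hj⟩ := hf.crosses_row 1
    exact ⟨j, by rw [insertRows_one, if_neg (not_crosses_zero j hj), one_add_one_eq_two]⟩
  · exact ⟨j₀, by rw [insertRows_two (by omega), if_pos hj₀, two_add_one_eq_three]⟩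
  · by_cases hr : r = 0
    · subst hr
      exact ⟨j₀, by rw [liftRow_zero, insertRows_zero_of_crosses (by omega) hj₀, zero_add]⟩
    obtain ⟨j, hj⟩ := hf.crosses_row r
    have hx : ¬CrossesRowZero f (r, j) := by
      rintro ⟨hc, h0 | rfl⟩
      · exact hr h0
      · exact not_crosses_zero j hj hc
    refine ⟨j, ?_⟩
    change insertRows f (liftCell (r, j)) = _
    rw [insertRows_liftCell (by omega) hx, hj]
    exact congrArg (·, j) (liftRow_add_one hr)

theorem insertRows_crosses_col (hf : IsFaultFreeMatching a b f) (ha : 2 ≤ a) (j : ZMod b) :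
    ∃ i, insertRows f (i, j) = (i, j + 1) := by
  have h01 : (0 : ZMod a) ≠ 1 := by
    exact_mod_cast ZMod.natCast_ne_natCast_of_lt (n := a) (k := 0) (l := 1)
      (by omega) (by omega) (by omega)
  obtain ⟨i, hi⟩ := hf.crosses_col j
  have hx : ¬CrossesRowZero f (i, j) := by
    rintro ⟨hc, rfl | rfl⟩
    · exact h01 (congrArg Prod.fst (hi.symm.trans hc))
    · exact h01 (congrArg Prod.fst ((hf.involutive.eq_iff.mp hc).trans hi))
  refine ⟨liftRow i, ?_⟩
  change insertRows f (liftCell (i, j)) = _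
  rw [insertRows_liftCell ha hx, hi]
  rfl

theorem insertRows (hf : IsFaultFreeMatching a b f) (ha : 3 ≤ a) :
    IsFaultFreeMatching (a + 2) b (insertRows f) where
  involutive := hf.insertRows_involutive (by omega)
  adj := hf.torAdj_insertRows (by omega)
  crosses_row := hf.insertRows_crosses_row ha
  crosses_col := hf.insertRows_crosses_col (by omega)

theorem exists_add_two_mul_rows (hf : IsFaultFreeMatching a b f) (ha : 3 ≤ a) (n : ℕ) :
    ∃ g, IsFaultFreeMatching (a + 2 * n) b g := by
  induction n with
  | zero => exact ⟨f, hf⟩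
  | succ n ih =>
    obtain ⟨g, hg⟩ := ih
    exact ⟨_, hg.insertRows (by omega)⟩

theorem faultFreeTileable_add_two_mul (hf : IsFaultFreeMatching a b f) (ha : 3 ≤ a)
    (hb : 3 ≤ b) (n m : ℕ) : torFaultFreeTileable (a + 2 * n) (b + 2 * m) := by
  obtain ⟨g, hg⟩ := hf.exists_add_two_mul_rows ha n
  obtain ⟨g', hg'⟩ := hg.transpose.exists_add_two_mul_rows hb m
  exact hg'.transpose.faultFreeTileable

end IsFaultFreeMatching

end InsertRows

inductive Dir
  | up | down | left | right

def Dir.offset {a b : ℕ} : Dir → ZMod a × ZMod b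
  | up => (-1, 0)
  | down => (1, 0)
  | left => (0, -1)
  | right => (0, 1)

def matchingOfDirs {a b : ℕ} (g : ZMod a → ZMod b → Dir) (x : ZMod a × ZMod b) :
    ZMod a × ZMod b :=
  x + (g x.1 x.2).offset

theorem torAdj_matchingOfDirs {a b : ℕ} (g : ZMod a → ZMod b → Dir) (x : ZMod a × ZMod b) :
    torAdj a b x (matchingOfDirs g x) := by
  unfold matchingOfDirs torAdj
  cases g x.1 x.2 <;> simp [Dir.offset]

section Grids

local notation "U" => Dir.up
local notation "D" => Dir.down
local notation "L" => Dir.left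
local notation "R" => Dir.right

def grid_8_7 : ZMod 8 → ZMod 7 → Dir :=
  ![![D, D, D, D, U, R, L],
    ![U, U, U, U, D, R, L],
    ![R, L, R, L, U, D, D],
    ![D, R, L, R, L, U, U],
    ![U, R, L, D, R, L, D],
    ![R, L, D, U, R, L, U],
    ![L, D, U, R, L, D, R],
    ![L, U, R, L, D, U, R]]

def grid_9_6 : ZMod 9 → ZMod 6 → Dir :=
  ![![R, L, U, U, D, D],
    ![R, L, D, D, U, U],
    ![L, D, U, U, D, R],
    ![D, U, R, L, U, D],
    ![U, D, D, R, L, U],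
    ![D, U, U, D, R, L],
    ![U, R, L, U, D, D],
    ![D, D, R, L, U, U],
    ![U, U, D, D, R, L]]

def grid_10_5 : ZMod 10 → ZMod 5 → Dir :=
  ![![D, D, U, R, L],
    ![U, U, D, R, L],
    ![R, L, U, D, D],
    ![D, R, L, U, U],
    ![U, D, R, L, D],
    ![D, U, R, L, U],
    ![U, R, L, D, D],
    ![R, L, D, U, U],
    ![L, D, U, D, R],
    ![L, U, D, U, R]]

end Grids

theorem isFaultFreeMatching_8_7 : IsFaultFreeMatching 8 7 (matchingOfDirs grid_8_7) :=
  ⟨by unfold Function.Involutive; decide, torAdj_matchingOfDirs _, by decide, by decide⟩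

theorem isFaultFreeMatching_9_6 : IsFaultFreeMatching 9 6 (matchingOfDirs grid_9_6) :=
  ⟨by unfold Function.Involutive; decide, torAdj_matchingOfDirs _, by decide, by decide⟩

theorem isFaultFreeMatching_10_5 : IsFaultFreeMatching 10 5 (matchingOfDirs grid_10_5) :=
  ⟨by unfold Function.Involutive; decide, torAdj_matchingOfDirs _, by decide, by decide⟩

/-- For all natural numbers `n` and `m`, each of the torus boards
`(8+2n)′ × (7+2m)′`, `(9+2n)′ × (6+2m)′`, and `(10+2n)′ × (5+2m)′` admits a
fault-free domino tiling. -/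
theorem tor_faultFree_families :
    ∀ n m : ℕ,
      torFaultFreeTileable (8 + 2 * n) (7 + 2 * m) ∧
      torFaultFreeTileable (9 + 2 * n) (6 + 2 * m) ∧
      torFaultFreeTileable (10 + 2 * n) (5 + 2 * m) := fun n m =>
  ⟨isFaultFreeMatching_8_7.faultFreeTileable_add_two_mul (by norm_num) (by norm_num) n m,
    isFaultFreeMatching_9_6.faultFreeTileable_add_two_mul (by norm_num) (by norm_num) n m,
    isFaultFreeMatching_10_5.faultFreeTileable_add_two_mul (by norm_num) (by norm_num) n m⟩
end
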